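/- Let L, β₀, ϑ > 0, ε ≥ 0 and z ∈ ℝ^{m×n}. Suppose x⁺ ∈ ℝ^{m×n} satisfies (L/2)‖x⁺ − z‖²_F + (β₀/(2ϑ))‖Πx⁺‖²_F ≤ min_{x ∈ ℝ^{m×n}} [ (L/2)‖x − z‖²_F + (β₀/(2ϑ))‖Πx‖²_F ] + ε. Then there exists δ ∈ ℝ^{m×n} with ‖δ‖_F ≤ √(2ε/L) and (β₀/ϑ)‖Πδ‖²_F ≤ 2ε such that L(x⁺ − z + δ) + (β₀/ϑ)Π(x⁺ + δ) = 0. -/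

import Mathlib

open scoped RealInnerProductSpace

/-- The column-average operator `x ↦ (1/m)·1 1ᵀ x` on `ℝ^{m×n}`
(viewed as a Euclidean space with the Frobenius inner product). -/
noncomputable def colAvg (m n : ℕ) (x : EuclideanSpace ℝ (Fin m × Fin n)) :
    EuclideanSpace ℝ (Fin m × Fin n) :=
  WithLp.toLp 2 (fun p : Fin m × Fin n => (m : ℝ)⁻¹ * ∑ k : Fin m, x (k, p.2))

/-- The operator `Π = I − (1/m)·1 1ᵀ` acting on `ℝ^{m×n}`. -/
noncomputable def cProj (m n : ℕ) (x : EuclideanSpace ℝ (Fin m × Fin n)) :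
    EuclideanSpace ℝ (Fin m × Fin n) :=
  x - colAvg m n x

/-!
For a symmetric projection `P` and `c ≥ 0`, `f x = L/2 ‖x - z‖² + c/2 ‖P x‖²` is a quadratic with
exact minimiser `y = z - c/(L+c) • P z`, the solution of `L • (y - z) + c • P y = 0`. Expanding
around `y` gives `f x - f y = L/2 ‖x - y‖² + c/2 ‖P (x - y)‖²`, so for `δ = y - x⁺` the
`ε`-optimality of `x⁺` bounds both terms by `ε`, while `x⁺ + δ = y` solves the optimality equation.
Here `P = Π = 1 - colAvg`.
-/

section SymmetricProjection

variable {E : Type*} [NormedAddCommGroup E] [InnerProductSpace ℝ E]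
  {P : E →ₗ[ℝ] E} {L c : ℝ} {z : E}

lemma LinearMap.IsSymmetricProjection.exists_stationary (hP : P.IsSymmetricProjection)
    (hLc : L + c ≠ 0) (z : E) : ∃ y : E, L • (y - z) + c • P y = 0 := by
  refine ⟨z - (c / (L + c)) • P z, ?_⟩
  have hPP : P (P z) = P z := congr($(hP.isIdempotentElem.eq) z)
  rw [map_sub, map_smul, hPP, sub_sub_cancel_left]
  match_scalars
  field_simp
  ring

lemma LinearMap.IsSymmetricProjection.quadratic_expansion (hP : P.IsSymmetricProjection)
    {y : E} (hy : L • (y - z) + c • P y = 0) (x : E) :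
    L / 2 * ‖x - z‖ ^ 2 + c / 2 * ‖P x‖ ^ 2 =
      L / 2 * ‖y - z‖ ^ 2 + c / 2 * ‖P y‖ ^ 2 +
        (L / 2 * ‖x - y‖ ^ 2 + c / 2 * ‖P (x - y)‖ ^ 2) := by
  have hcross : L * ⟪y - z, x - y⟫ + c * ⟪P y, P (x - y)⟫ = 0 := by
    have hPP : P (P y) = P y := congr($(hP.isIdempotentElem.eq) y)
    rw [← hP.isSymmetric, hPP, ← real_inner_smul_left, ← real_inner_smul_left, ← inner_add_left,
      hy, inner_zero_left]
  have hx : x - z = (y - z) + (x - y) := by abel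
  have hPx : P x = P y + P (x - y) := by rw [← map_add, add_sub_cancel]
  rw [hx, hPx, norm_add_sq_real, norm_add_sq_real]
  linear_combination hcross

theorem LinearMap.IsSymmetricProjection.exists_correction_of_approx_min
    (hP : P.IsSymmetricProjection) (hL : 0 < L) (hc : 0 ≤ c) {ε : ℝ} {xplus : E}
    (hxp : ∀ x : E, L / 2 * ‖xplus - z‖ ^ 2 + c / 2 * ‖P xplus‖ ^ 2 ≤
      L / 2 * ‖x - z‖ ^ 2 + c / 2 * ‖P x‖ ^ 2 + ε) :
    ∃ δ : E, ‖δ‖ ≤ √(2 * ε / L) ∧ c * ‖P δ‖ ^ 2 ≤ 2 * ε ∧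
      L • (xplus - z + δ) + c • P (xplus + δ) = 0 := by
  obtain ⟨y, hy⟩ := hP.exists_stationary (add_pos_of_pos_of_nonneg hL hc).ne' z
  have hgap : L / 2 * ‖y - xplus‖ ^ 2 + c / 2 * ‖P (y - xplus)‖ ^ 2 ≤ ε := by
    have hsymm : ‖P (xplus - y)‖ = ‖P (y - xplus)‖ := by rw [← norm_neg, ← map_neg, neg_sub]
    have := hxp y
    rw [hP.quadratic_expansion hy xplus, norm_sub_rev xplus y, hsymm] at this
    linarith
  have hδ : 0 ≤ L / 2 * ‖y - xplus‖ ^ 2 := by positivity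
  have hPδ : 0 ≤ c / 2 * ‖P (y - xplus)‖ ^ 2 := by positivity
  refine ⟨y - xplus, ?_, by linarith, by rwa [add_sub_cancel, sub_add_sub_cancel']⟩
  rw [Real.le_sqrt (norm_nonneg _) (div_nonneg (by linarith) hL.le), le_div_iff₀ hL]
  linarith

end SymmetricProjection

section ColumnCentering

variable (m n : ℕ)

noncomputable def colAvgₗ :
    EuclideanSpace ℝ (Fin m × Fin n) →ₗ[ℝ] EuclideanSpace ℝ (Fin m × Fin n) where
  toFun := colAvg m n
  map_add' x y := by ext p; simp [colAvg, Finset.sum_add_distrib, mul_add]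
  map_smul' r x := by ext p; simp [colAvg, Finset.mul_sum, mul_left_comm]

noncomputable def cProjₗ :
    EuclideanSpace ℝ (Fin m × Fin n) →ₗ[ℝ] EuclideanSpace ℝ (Fin m × Fin n) :=
  1 - colAvgₗ m n

lemma coe_cProjₗ : ⇑(cProjₗ m n) = cProj m n := rfl

variable {m n}

lemma inner_colAvg_left (x y : EuclideanSpace ℝ (Fin m × Fin n)) :
    ⟪colAvg m n x, y⟫ = (m : ℝ)⁻¹ * ∑ j, (∑ k, x (k, j)) * ∑ i, y (i, j) := by
  simp only [PiLp.inner_apply, RCLike.inner_apply, conj_trivial, colAvg, Fintype.sum_prod_type]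
  rw [Finset.sum_comm, Finset.mul_sum]
  refine Finset.sum_congr rfl fun j _ => ?_
  rw [← Finset.sum_mul]
  ring

lemma colAvgₗ_isSymmetric : (colAvgₗ m n).IsSymmetric := fun x y => by
  rw [real_inner_comm (colAvgₗ m n y) x]
  simp only [colAvgₗ, LinearMap.coe_mk, AddHom.coe_mk, inner_colAvg_left, mul_comm]

lemma colAvgₗ_isIdempotentElem (hm : 0 < m) : IsIdempotentElem (colAvgₗ m n) := by
  refine LinearMap.ext fun x => ?_
  ext p
  simp only [colAvgₗ, Module.End.mul_apply, LinearMap.coe_mk, AddHom.coe_mk, colAvg,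
    PiLp.toLp_apply, Finset.sum_const, Finset.card_univ, Fintype.card_fin, nsmul_eq_mul]
  field_simp

lemma cProjₗ_isSymmetricProjection (hm : 0 < m) : (cProjₗ m n).IsSymmetricProjection :=
  ⟨(colAvgₗ_isIdempotentElem hm).one_sub, LinearMap.IsSymmetric.one.sub colAvgₗ_isSymmetric⟩

end ColumnCentering

theorem stmt4_general (m n : ℕ) (hm : 0 < m) (L β₀ ϑ ε : ℝ)
    (hL : 0 < L) (hβ₀ : 0 < β₀) (hϑ : 0 < ϑ)
    (z xplus : EuclideanSpace ℝ (Fin m × Fin n))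
    (hxp : ∀ x : EuclideanSpace ℝ (Fin m × Fin n),
      (L / 2) * ‖xplus - z‖ ^ 2 + (β₀ / (2 * ϑ)) * ‖cProj m n xplus‖ ^ 2 ≤
        (L / 2) * ‖x - z‖ ^ 2 + (β₀ / (2 * ϑ)) * ‖cProj m n x‖ ^ 2 + ε) :
    ∃ δ : EuclideanSpace ℝ (Fin m × Fin n),
      ‖δ‖ ≤ Real.sqrt (2 * ε / L) ∧
      (β₀ / ϑ) * ‖cProj m n δ‖ ^ 2 ≤ 2 * ε ∧
      L • (xplus - z + δ) + (β₀ / ϑ) • cProj m n (xplus + δ) = 0 := by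
  have hhalf : β₀ / (2 * ϑ) = β₀ / ϑ / 2 := by ring
  rw [← coe_cProjₗ]
  exact (cProjₗ_isSymmetricProjection hm).exists_correction_of_approx_min hL
    (div_pos hβ₀ hϑ).le fun x => by rw [← hhalf]; exact hxp x

theorem stmt4 (m n : ℕ) (hm : 0 < m) (L β₀ ϑ ε : ℝ)
    (hL : 0 < L) (hβ₀ : 0 < β₀) (hϑ : 0 < ϑ) (hε : 0 ≤ ε)
    (z xplus : EuclideanSpace ℝ (Fin m × Fin n))
    (hxp : ∀ x : EuclideanSpace ℝ (Fin m × Fin n),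
      (L / 2) * ‖xplus - z‖ ^ 2 + (β₀ / (2 * ϑ)) * ‖cProj m n xplus‖ ^ 2 ≤
        (L / 2) * ‖x - z‖ ^ 2 + (β₀ / (2 * ϑ)) * ‖cProj m n x‖ ^ 2 + ε) :
    ∃ δ : EuclideanSpace ℝ (Fin m × Fin n),
      ‖δ‖ ≤ Real.sqrt (2 * ε / L) ∧
      (β₀ / ϑ) * ‖cProj m n δ‖ ^ 2 ≤ 2 * ε ∧
      L • (xplus - z + δ) + (β₀ / ϑ) • cProj m n (xplus + δ) = 0 :=
  stmt4_general m n hm L β₀ ϑ ε hL hβ₀ hϑ z xplus hxp
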